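/- arXiv:2104.03264 — 4 statements merged into one kernel-verified Lean document; each statement's English description precedes it below -/
import Mathlib

section
/- For each of the twelve patterns p ∈ P^{3412} = {34512, 34521, 35412, 35421, 45123, 45213, 45231, 53412, 53421, 54123, 54213, 54231}, the product w_0(J(p))·p contains the pattern 3412. -/
open Equiv

/-- one-line notation (1-based values) of a permutation of `Fin n` -/
def oneLine {n : ℕ} (w : Perm (Fin n)) : List ℕ := List.ofFn fun i => (w i).val + 1

/-- `w` contains the pattern given by the list `p` (distinct positive integers
in one-line notation): some subsequence of `w` has the same relative order. -/
def ContainsPat {n : ℕ} (w : Perm (Fin n)) (p : List ℕ) : Prop :=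
  ∃ f : Fin p.length → Fin n, StrictMono f ∧
    ∀ i j : Fin p.length, p.get i < p.get j ↔ w (f i) < w (f j)

/-- Coxeter length of a permutation = number of inversions -/
def len {n : ℕ} (w : Perm (Fin n)) : ℕ :=
  (Finset.univ.filter fun q : Fin n × Fin n => q.1 < q.2 ∧ w q.2 < w q.1).card

/-- the simple generators `s_i = (i, i+1)` that are left descents of `w` -/
def descentGens {n : ℕ} (w : Perm (Fin n)) : Set (Perm (Fin n)) :=
  {u | ∃ i j : Fin n, (i : ℕ) + 1 = (j : ℕ) ∧ u = Equiv.swap i j ∧ w⁻¹ j < w⁻¹ i}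

/-- `v` is the longest element `w₀(J(w))` of the parabolic subgroup generated by
the left descents of `w` -/
def IsW0J {n : ℕ} (w v : Perm (Fin n)) : Prop :=
  v ∈ Subgroup.closure (descentGens w) ∧
    ∀ u ∈ Subgroup.closure (descentGens w), len u ≤ len v

/-- `v[1,i]`: the set of values in the first `i` positions (`i` is 1-based) -/
def prefSet {n : ℕ} (v : Perm (Fin n)) (i : ℕ) : Finset (Fin n) :=
  (Finset.univ.filter fun j : Fin n => (j : ℕ) < i).image v

/-- `(v,w)` is divisible after position `i` : `|v[1,i] ∩ w[1,i]| ≤ i - 2` -/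
def DivisibleAfter {n : ℕ} (v w : Perm (Fin n)) (i : ℕ) : Prop :=
  (prefSet v i ∩ prefSet w i).card + 2 ≤ i

/-- `(v,w)` is divisible at position `i` : `v(i) = w(i)` and `|v[1,i] ∩ w[1,i]| ≤ i - 1` -/
def DivisibleAt {n : ℕ} (v w : Perm (Fin n)) (i : ℕ) : Prop :=
  ∃ h : i - 1 < n, v ⟨i - 1, h⟩ = w ⟨i - 1, h⟩ ∧ (prefSet v i ∩ prefSet w i).card + 1 ≤ i

/-- `(v,w)` is divisible at or after some position `1 ≤ i ≤ n` -/
def Divisible {n : ℕ} (v w : Perm (Fin n)) : Prop :=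
  ∃ i : ℕ, 1 ≤ i ∧ i ≤ n ∧ (DivisibleAfter v w i ∨ DivisibleAt v w i)

def pat321 : List ℕ := [3, 2, 1]
def pat3412 : List ℕ := [3, 4, 1, 2]

def P321L : List (List ℕ) :=
  [[2,4,5,3,1],[2,5,3,1,4],[2,5,3,4,1],[4,2,5,3,1],[4,5,2,3,1],[4,5,3,1,2],
   [5,2,3,1,4],[5,2,3,4,1],[5,3,1,2,4],[5,3,1,4,2],[5,3,4,1,2]]

def P3412L : List (List ℕ) :=
  [[3,4,5,1,2],[3,4,5,2,1],[3,5,4,1,2],[3,5,4,2,1],[4,5,1,2,3],[4,5,2,1,3],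
   [4,5,2,3,1],[5,3,4,1,2],[5,3,4,2,1],[5,4,1,2,3],[5,4,2,1,3],[5,4,2,3,1]]

def PL : List (List ℕ) :=
  [[2,4,5,3,1],[2,5,3,1,4],[2,5,3,4,1],[3,4,5,1,2],[3,4,5,2,1],[3,5,4,1,2],[3,5,4,2,1],
   [4,2,5,3,1],[4,5,1,2,3],[4,5,2,1,3],[4,5,2,3,1],[4,5,3,1,2],[5,2,3,1,4],[5,2,3,4,1],
   [5,3,1,2,4],[5,3,1,4,2],[5,3,4,1,2],[5,3,4,2,1],[5,4,1,2,3],[5,4,2,1,3],[5,4,2,3,1]]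

/-- Bruhat order: generated by covers `a ⋖ a·t` with `t` a transposition and
`ℓ(a·t) = ℓ(a) + 1` -/
def BruhatLE {n : ℕ} (v w : Perm (Fin n)) : Prop :=
  Relation.ReflTransGen
    (fun a b => (∃ x y : Fin n, x ≠ y ∧ b = a * Equiv.swap x y) ∧ len b = len a + 1) v w

/-- product of a word in the simple generators `s_i = (i, i+1)` -/
def wordProd {n : ℕ} (l : List {i : ℕ // i + 1 < n}) : Perm (Fin n) :=
  (l.map fun i => Equiv.swap (⟨i.1, Nat.lt_of_succ_lt i.2⟩ : Fin n) ⟨i.1 + 1, i.2⟩).prod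

/-- `l` is a reduced word for `w`: a minimal-length expression of `w` as a
product of simple generators -/
def IsReducedWord {n : ℕ} (w : Perm (Fin n)) (l : List {i : ℕ // i + 1 < n}) : Prop :=
  wordProd l = w ∧
    ∀ l' : List {i : ℕ // i + 1 < n}, wordProd l' = w → l.length ≤ l'.length


def mk5 (f g : Fin 5 → Fin 5) (h1 : Function.LeftInverse g f)
    (h2 : Function.RightInverse g f) : Perm (Fin 5) := ⟨f, g, h1, h2⟩

def blockSub (f : Fin 5 → Fin 5) : Subgroup (Perm (Fin 5)) where
  carrier := {u | ∀ x, f (u x) = f x}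
  one_mem' := fun _ => rfl
  mul_mem' := by
    intro a b ha hb x
    have h1 := ha (b x)
    have h2 := hb x
    simpa [Perm.mul_apply, h2] using h1
  inv_mem' := by
    intro a ha x
    have := ha (a⁻¹ x)
    rw [show a (a⁻¹ x) = x from a.apply_symm_apply x] at this
    exact this.symm

lemma key (p v w0 : Perm (Fin 5)) (f : Fin 5 → Fin 5)
    (hsub : ∀ i j : Fin 5, (i : ℕ) + 1 = (j : ℕ) → p⁻¹ j < p⁻¹ i →
      ∀ x, f (Equiv.swap i j x) = f x)
    (hw0 : w0 ∈ Subgroup.closure (descentGens p))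
    (huniq : ∀ u : Perm (Fin 5), (∀ x, f (u x) = f x) → len w0 ≤ len u → u = w0)
    (hv : IsW0J p v) : v = w0 := by
  have h1 : descentGens p ⊆ (blockSub f : Set (Perm (Fin 5))) := by
    rintro u ⟨i, j, hij, rfl, hlt⟩
    exact hsub i j hij hlt
  have h2 : v ∈ blockSub f := (Subgroup.closure_le (blockSub f)).mpr h1 hv.1
  exact huniq v h2 (hv.2 w0 hw0)

lemma oneLine_inj {p q : Perm (Fin 5)} (h : oneLine p = oneLine q) : p = q := by
  have h2 := List.ofFn_inj.mp h
  refine Equiv.ext fun i => ?_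
  have h3 := congrFun h2 i
  exact Fin.val_injective (Nat.succ_injective h3)

def cP1 : Perm (Fin 5) := mk5 ![2,3,4,0,1] ![3,4,0,1,2] (by decide) (by decide)
def cW1 : Perm (Fin 5) := mk5 ![0,2,1,3,4] ![0,2,1,3,4] (by decide) (by decide)

set_option maxRecDepth 40000 in
lemma final1 (v : Perm (Fin 5)) (hv : IsW0J cP1 v) : ContainsPat (v * cP1) pat3412 := by
  have hw0 : cW1 ∈ Subgroup.closure (descentGens cP1) := by
    have hprod : cW1 = Equiv.swap (1 : Fin 5) 2 := by decide
    rw [hprod]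
    exact (Subgroup.subset_closure (⟨1, 2, by decide, rfl, by decide⟩ : Equiv.swap (1 : Fin 5) 2 ∈ descentGens cP1))
  have hvw : v = cW1 := key cP1 v cW1 ![0,1,1,3,4] (by decide) hw0 (by decide) hv
  rw [hvw]
  unfold ContainsPat StrictMono
  decide

def cP2 : Perm (Fin 5) := mk5 ![2,3,4,1,0] ![4,3,0,1,2] (by decide) (by decide)
def cW2 : Perm (Fin 5) := mk5 ![2,1,0,3,4] ![2,1,0,3,4] (by decide) (by decide)

set_option maxRecDepth 40000 in
lemma final2 (v : Perm (Fin 5)) (hv : IsW0J cP2 v) : ContainsPat (v * cP2) pat3412 := by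
  have hw0 : cW2 ∈ Subgroup.closure (descentGens cP2) := by
    have hprod : cW2 = Equiv.swap (0 : Fin 5) 1 * (Equiv.swap (1 : Fin 5) 2 * (Equiv.swap (0 : Fin 5) 1)) := by decide
    rw [hprod]
    exact Subgroup.mul_mem _ (Subgroup.subset_closure (⟨0, 1, by decide, rfl, by decide⟩ : Equiv.swap (0 : Fin 5) 1 ∈ descentGens cP2)) (Subgroup.mul_mem _ (Subgroup.subset_closure (⟨1, 2, by decide, rfl, by decide⟩ : Equiv.swap (1 : Fin 5) 2 ∈ descentGens cP2)) ((Subgroup.subset_closure (⟨0, 1, by decide, rfl, by decide⟩ : Equiv.swap (0 : Fin 5) 1 ∈ descentGens cP2))))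
  have hvw : v = cW2 := key cP2 v cW2 ![0,0,0,3,4] (by decide) hw0 (by decide) hv
  rw [hvw]
  unfold ContainsPat StrictMono
  decide

def cP3 : Perm (Fin 5) := mk5 ![2,4,3,0,1] ![3,4,0,2,1] (by decide) (by decide)
def cW3 : Perm (Fin 5) := mk5 ![0,2,1,4,3] ![0,2,1,4,3] (by decide) (by decide)

set_option maxRecDepth 40000 in
lemma final3 (v : Perm (Fin 5)) (hv : IsW0J cP3 v) : ContainsPat (v * cP3) pat3412 := by
  have hw0 : cW3 ∈ Subgroup.closure (descentGens cP3) := by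
    have hprod : cW3 = Equiv.swap (1 : Fin 5) 2 * (Equiv.swap (3 : Fin 5) 4) := by decide
    rw [hprod]
    exact Subgroup.mul_mem _ (Subgroup.subset_closure (⟨1, 2, by decide, rfl, by decide⟩ : Equiv.swap (1 : Fin 5) 2 ∈ descentGens cP3)) ((Subgroup.subset_closure (⟨3, 4, by decide, rfl, by decide⟩ : Equiv.swap (3 : Fin 5) 4 ∈ descentGens cP3)))
  have hvw : v = cW3 := key cP3 v cW3 ![0,1,1,3,3] (by decide) hw0 (by decide) hv
  rw [hvw]
  unfold ContainsPat StrictMono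
  decide

def cP4 : Perm (Fin 5) := mk5 ![2,4,3,1,0] ![4,3,0,2,1] (by decide) (by decide)
def cW4 : Perm (Fin 5) := mk5 ![2,1,0,4,3] ![2,1,0,4,3] (by decide) (by decide)

set_option maxRecDepth 40000 in
lemma final4 (v : Perm (Fin 5)) (hv : IsW0J cP4 v) : ContainsPat (v * cP4) pat3412 := by
  have hw0 : cW4 ∈ Subgroup.closure (descentGens cP4) := by
    have hprod : cW4 = Equiv.swap (0 : Fin 5) 1 * (Equiv.swap (1 : Fin 5) 2 * (Equiv.swap (0 : Fin 5) 1 * (Equiv.swap (3 : Fin 5) 4))) := by decide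
    rw [hprod]
    exact Subgroup.mul_mem _ (Subgroup.subset_closure (⟨0, 1, by decide, rfl, by decide⟩ : Equiv.swap (0 : Fin 5) 1 ∈ descentGens cP4)) (Subgroup.mul_mem _ (Subgroup.subset_closure (⟨1, 2, by decide, rfl, by decide⟩ : Equiv.swap (1 : Fin 5) 2 ∈ descentGens cP4)) (Subgroup.mul_mem _ (Subgroup.subset_closure (⟨0, 1, by decide, rfl, by decide⟩ : Equiv.swap (0 : Fin 5) 1 ∈ descentGens cP4)) ((Subgroup.subset_closure (⟨3, 4, by decide, rfl, by decide⟩ : Equiv.swap (3 : Fin 5) 4 ∈ descentGens cP4)))))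
  have hvw : v = cW4 := key cP4 v cW4 ![0,0,0,3,3] (by decide) hw0 (by decide) hv
  rw [hvw]
  unfold ContainsPat StrictMono
  decide

def cP5 : Perm (Fin 5) := mk5 ![3,4,0,1,2] ![2,3,4,0,1] (by decide) (by decide)
def cW5 : Perm (Fin 5) := mk5 ![0,1,3,2,4] ![0,1,3,2,4] (by decide) (by decide)

set_option maxRecDepth 40000 in
lemma final5 (v : Perm (Fin 5)) (hv : IsW0J cP5 v) : ContainsPat (v * cP5) pat3412 := by
  have hw0 : cW5 ∈ Subgroup.closure (descentGens cP5) := by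
    have hprod : cW5 = Equiv.swap (2 : Fin 5) 3 := by decide
    rw [hprod]
    exact (Subgroup.subset_closure (⟨2, 3, by decide, rfl, by decide⟩ : Equiv.swap (2 : Fin 5) 3 ∈ descentGens cP5))
  have hvw : v = cW5 := key cP5 v cW5 ![0,1,2,2,4] (by decide) hw0 (by decide) hv
  rw [hvw]
  unfold ContainsPat StrictMono
  decide

def cP6 : Perm (Fin 5) := mk5 ![3,4,1,0,2] ![3,2,4,0,1] (by decide) (by decide)
def cW6 : Perm (Fin 5) := mk5 ![1,0,3,2,4] ![1,0,3,2,4] (by decide) (by decide)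

set_option maxRecDepth 40000 in
lemma final6 (v : Perm (Fin 5)) (hv : IsW0J cP6 v) : ContainsPat (v * cP6) pat3412 := by
  have hw0 : cW6 ∈ Subgroup.closure (descentGens cP6) := by
    have hprod : cW6 = Equiv.swap (0 : Fin 5) 1 * (Equiv.swap (2 : Fin 5) 3) := by decide
    rw [hprod]
    exact Subgroup.mul_mem _ (Subgroup.subset_closure (⟨0, 1, by decide, rfl, by decide⟩ : Equiv.swap (0 : Fin 5) 1 ∈ descentGens cP6)) ((Subgroup.subset_closure (⟨2, 3, by decide, rfl, by decide⟩ : Equiv.swap (2 : Fin 5) 3 ∈ descentGens cP6)))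
  have hvw : v = cW6 := key cP6 v cW6 ![0,0,2,2,4] (by decide) hw0 (by decide) hv
  rw [hvw]
  unfold ContainsPat StrictMono
  decide

def cP7 : Perm (Fin 5) := mk5 ![3,4,1,2,0] ![4,2,3,0,1] (by decide) (by decide)
def cW7 : Perm (Fin 5) := mk5 ![1,0,3,2,4] ![1,0,3,2,4] (by decide) (by decide)

set_option maxRecDepth 40000 in
lemma final7 (v : Perm (Fin 5)) (hv : IsW0J cP7 v) : ContainsPat (v * cP7) pat3412 := by
  have hw0 : cW7 ∈ Subgroup.closure (descentGens cP7) := by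
    have hprod : cW7 = Equiv.swap (0 : Fin 5) 1 * (Equiv.swap (2 : Fin 5) 3) := by decide
    rw [hprod]
    exact Subgroup.mul_mem _ (Subgroup.subset_closure (⟨0, 1, by decide, rfl, by decide⟩ : Equiv.swap (0 : Fin 5) 1 ∈ descentGens cP7)) ((Subgroup.subset_closure (⟨2, 3, by decide, rfl, by decide⟩ : Equiv.swap (2 : Fin 5) 3 ∈ descentGens cP7)))
  have hvw : v = cW7 := key cP7 v cW7 ![0,0,2,2,4] (by decide) hw0 (by decide) hv
  rw [hvw]
  unfold ContainsPat StrictMono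
  decide

def cP8 : Perm (Fin 5) := mk5 ![4,2,3,0,1] ![3,4,1,2,0] (by decide) (by decide)
def cW8 : Perm (Fin 5) := mk5 ![0,2,1,4,3] ![0,2,1,4,3] (by decide) (by decide)

set_option maxRecDepth 40000 in
lemma final8 (v : Perm (Fin 5)) (hv : IsW0J cP8 v) : ContainsPat (v * cP8) pat3412 := by
  have hw0 : cW8 ∈ Subgroup.closure (descentGens cP8) := by
    have hprod : cW8 = Equiv.swap (1 : Fin 5) 2 * (Equiv.swap (3 : Fin 5) 4) := by decide
    rw [hprod]
    exact Subgroup.mul_mem _ (Subgroup.subset_closure (⟨1, 2, by decide, rfl, by decide⟩ : Equiv.swap (1 : Fin 5) 2 ∈ descentGens cP8)) ((Subgroup.subset_closure (⟨3, 4, by decide, rfl, by decide⟩ : Equiv.swap (3 : Fin 5) 4 ∈ descentGens cP8)))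
  have hvw : v = cW8 := key cP8 v cW8 ![0,1,1,3,3] (by decide) hw0 (by decide) hv
  rw [hvw]
  unfold ContainsPat StrictMono
  decide

def cP9 : Perm (Fin 5) := mk5 ![4,2,3,1,0] ![4,3,1,2,0] (by decide) (by decide)
def cW9 : Perm (Fin 5) := mk5 ![2,1,0,4,3] ![2,1,0,4,3] (by decide) (by decide)

set_option maxRecDepth 40000 in
lemma final9 (v : Perm (Fin 5)) (hv : IsW0J cP9 v) : ContainsPat (v * cP9) pat3412 := by
  have hw0 : cW9 ∈ Subgroup.closure (descentGens cP9) := by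
    have hprod : cW9 = Equiv.swap (0 : Fin 5) 1 * (Equiv.swap (1 : Fin 5) 2 * (Equiv.swap (0 : Fin 5) 1 * (Equiv.swap (3 : Fin 5) 4))) := by decide
    rw [hprod]
    exact Subgroup.mul_mem _ (Subgroup.subset_closure (⟨0, 1, by decide, rfl, by decide⟩ : Equiv.swap (0 : Fin 5) 1 ∈ descentGens cP9)) (Subgroup.mul_mem _ (Subgroup.subset_closure (⟨1, 2, by decide, rfl, by decide⟩ : Equiv.swap (1 : Fin 5) 2 ∈ descentGens cP9)) (Subgroup.mul_mem _ (Subgroup.subset_closure (⟨0, 1, by decide, rfl, by decide⟩ : Equiv.swap (0 : Fin 5) 1 ∈ descentGens cP9)) ((Subgroup.subset_closure (⟨3, 4, by decide, rfl, by decide⟩ : Equiv.swap (3 : Fin 5) 4 ∈ descentGens cP9)))))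
  have hvw : v = cW9 := key cP9 v cW9 ![0,0,0,3,3] (by decide) hw0 (by decide) hv
  rw [hvw]
  unfold ContainsPat StrictMono
  decide

def cP10 : Perm (Fin 5) := mk5 ![4,3,0,1,2] ![2,3,4,1,0] (by decide) (by decide)
def cW10 : Perm (Fin 5) := mk5 ![0,1,4,3,2] ![0,1,4,3,2] (by decide) (by decide)

set_option maxRecDepth 40000 in
lemma final10 (v : Perm (Fin 5)) (hv : IsW0J cP10 v) : ContainsPat (v * cP10) pat3412 := by
  have hw0 : cW10 ∈ Subgroup.closure (descentGens cP10) := by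
    have hprod : cW10 = Equiv.swap (2 : Fin 5) 3 * (Equiv.swap (3 : Fin 5) 4 * (Equiv.swap (2 : Fin 5) 3)) := by decide
    rw [hprod]
    exact Subgroup.mul_mem _ (Subgroup.subset_closure (⟨2, 3, by decide, rfl, by decide⟩ : Equiv.swap (2 : Fin 5) 3 ∈ descentGens cP10)) (Subgroup.mul_mem _ (Subgroup.subset_closure (⟨3, 4, by decide, rfl, by decide⟩ : Equiv.swap (3 : Fin 5) 4 ∈ descentGens cP10)) ((Subgroup.subset_closure (⟨2, 3, by decide, rfl, by decide⟩ : Equiv.swap (2 : Fin 5) 3 ∈ descentGens cP10))))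
  have hvw : v = cW10 := key cP10 v cW10 ![0,1,2,2,2] (by decide) hw0 (by decide) hv
  rw [hvw]
  unfold ContainsPat StrictMono
  decide

def cP11 : Perm (Fin 5) := mk5 ![4,3,1,0,2] ![3,2,4,1,0] (by decide) (by decide)
def cW11 : Perm (Fin 5) := mk5 ![1,0,4,3,2] ![1,0,4,3,2] (by decide) (by decide)

set_option maxRecDepth 40000 in
lemma final11 (v : Perm (Fin 5)) (hv : IsW0J cP11 v) : ContainsPat (v * cP11) pat3412 := by
  have hw0 : cW11 ∈ Subgroup.closure (descentGens cP11) := by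
    have hprod : cW11 = Equiv.swap (0 : Fin 5) 1 * (Equiv.swap (2 : Fin 5) 3 * (Equiv.swap (3 : Fin 5) 4 * (Equiv.swap (2 : Fin 5) 3))) := by decide
    rw [hprod]
    exact Subgroup.mul_mem _ (Subgroup.subset_closure (⟨0, 1, by decide, rfl, by decide⟩ : Equiv.swap (0 : Fin 5) 1 ∈ descentGens cP11)) (Subgroup.mul_mem _ (Subgroup.subset_closure (⟨2, 3, by decide, rfl, by decide⟩ : Equiv.swap (2 : Fin 5) 3 ∈ descentGens cP11)) (Subgroup.mul_mem _ (Subgroup.subset_closure (⟨3, 4, by decide, rfl, by decide⟩ : Equiv.swap (3 : Fin 5) 4 ∈ descentGens cP11)) ((Subgroup.subset_closure (⟨2, 3, by decide, rfl, by decide⟩ : Equiv.swap (2 : Fin 5) 3 ∈ descentGens cP11)))))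
  have hvw : v = cW11 := key cP11 v cW11 ![0,0,2,2,2] (by decide) hw0 (by decide) hv
  rw [hvw]
  unfold ContainsPat StrictMono
  decide

def cP12 : Perm (Fin 5) := mk5 ![4,3,1,2,0] ![4,2,3,1,0] (by decide) (by decide)
def cW12 : Perm (Fin 5) := mk5 ![1,0,4,3,2] ![1,0,4,3,2] (by decide) (by decide)

set_option maxRecDepth 40000 in
lemma final12 (v : Perm (Fin 5)) (hv : IsW0J cP12 v) : ContainsPat (v * cP12) pat3412 := by
  have hw0 : cW12 ∈ Subgroup.closure (descentGens cP12) := by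
    have hprod : cW12 = Equiv.swap (0 : Fin 5) 1 * (Equiv.swap (2 : Fin 5) 3 * (Equiv.swap (3 : Fin 5) 4 * (Equiv.swap (2 : Fin 5) 3))) := by decide
    rw [hprod]
    exact Subgroup.mul_mem _ (Subgroup.subset_closure (⟨0, 1, by decide, rfl, by decide⟩ : Equiv.swap (0 : Fin 5) 1 ∈ descentGens cP12)) (Subgroup.mul_mem _ (Subgroup.subset_closure (⟨2, 3, by decide, rfl, by decide⟩ : Equiv.swap (2 : Fin 5) 3 ∈ descentGens cP12)) (Subgroup.mul_mem _ (Subgroup.subset_closure (⟨3, 4, by decide, rfl, by decide⟩ : Equiv.swap (3 : Fin 5) 4 ∈ descentGens cP12)) ((Subgroup.subset_closure (⟨2, 3, by decide, rfl, by decide⟩ : Equiv.swap (2 : Fin 5) 3 ∈ descentGens cP12)))))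
  have hvw : v = cW12 := key cP12 v cW12 ![0,0,2,2,2] (by decide) hw0 (by decide) hv
  rw [hvw]
  unfold ContainsPat StrictMono
  decide


theorem stmt12 (p : Perm (Fin 5)) (hp : oneLine p ∈ P3412L)
    (v : Perm (Fin 5)) (hv : IsW0J p v) :
    ContainsPat (v * p) pat3412 := by
  simp only [P3412L, List.mem_cons, List.not_mem_nil, or_false] at hp
  rcases hp with h|h|h|h|h|h|h|h|h|h|h|h
  · obtain rfl : p = cP1 := oneLine_inj (h.trans (by decide))
    exact final1 v hv
  · obtain rfl : p = cP2 := oneLine_inj (h.trans (by decide))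
    exact final2 v hv
  · obtain rfl : p = cP3 := oneLine_inj (h.trans (by decide))
    exact final3 v hv
  · obtain rfl : p = cP4 := oneLine_inj (h.trans (by decide))
    exact final4 v hv
  · obtain rfl : p = cP5 := oneLine_inj (h.trans (by decide))
    exact final5 v hv
  · obtain rfl : p = cP6 := oneLine_inj (h.trans (by decide))
    exact final6 v hv
  · obtain rfl : p = cP7 := oneLine_inj (h.trans (by decide))
    exact final7 v hv
  · obtain rfl : p = cP8 := oneLine_inj (h.trans (by decide))
    exact final8 v hv
  · obtain rfl : p = cP9 := oneLine_inj (h.trans (by decide))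
    exact final9 v hv
  · obtain rfl : p = cP10 := oneLine_inj (h.trans (by decide))
    exact final10 v hv
  · obtain rfl : p = cP11 := oneLine_inj (h.trans (by decide))
    exact final11 v hv
  · obtain rfl : p = cP12 := oneLine_inj (h.trans (by decide))
    exact final12 v hv
end

section
/- If a permutation w ∈ S_n contains a pattern p from P^{321} = {24531, 25314, 25341, 42531, 45231, 45312, 52314, 52341, 53124, 53142, 53412}, then w_0(J(w))·w contains the pattern 321. -/
open Equiv

lemma sep_aux {n : ℕ} (w : Perm (Fin n)) (a b d : Fin n) (hab : a < b)
    (hd : d < a ∨ b < d) (h1 : w b < w d) (h2 : w d < w a) :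
    ∃ (m : ℕ) (hm : m + 1 < n),
      (w b).val ≤ m ∧ m < (w a).val ∧
      w⁻¹ ⟨m, Nat.lt_of_succ_lt hm⟩ < w⁻¹ ⟨m + 1, hm⟩ := by
  by_contra hcon
  push_neg at hcon
  have step : ∀ (m : ℕ) (hm : m + 1 < n), (w b).val ≤ m → m + 1 ≤ (w a).val →
      w⁻¹ ⟨m + 1, hm⟩ < w⁻¹ ⟨m, Nat.lt_of_succ_lt hm⟩ := by
    intro m hm hb ha
    have hle := hcon m hm hb (by omega)
    have hne : w⁻¹ ⟨m + 1, hm⟩ ≠ w⁻¹ ⟨m, Nat.lt_of_succ_lt hm⟩ := by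
      intro h
      have := w⁻¹.injective h
      simp [Fin.ext_iff] at this
    exact lt_of_le_of_ne hle hne
  have mono : ∀ (k j j' : ℕ) (hj : j < n) (hj' : j' < n), (w b).val ≤ j →
      j' ≤ (w a).val → j' = j + k → w⁻¹ ⟨j', hj'⟩ ≤ w⁻¹ ⟨j, hj⟩ := by
    intro k
    induction k with
    | zero =>
      intro j j' hj hj' _ _ hE
      exact le_of_eq (congrArg _ (Fin.ext (show j' = j by omega)))
    | succ k ih =>
      intro j j' hj hj' hb ha hE
      have hjk : j + k < n := by omega
      have hlt := step (j + k) (by omega) (by omega) (by omega)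
      have hE2 : (⟨j', hj'⟩ : Fin n) = ⟨j + k + 1, by omega⟩ :=
        Fin.ext (show j' = j + k + 1 by omega)
      rw [hE2]
      exact le_trans (le_of_lt hlt) (ih j (j + k) hj hjk hb (by omega) rfl)
  have mono' : ∀ (j j' : ℕ) (hj : j < n) (hj' : j' < n), (w b).val ≤ j →
      j' ≤ (w a).val → j < j' → w⁻¹ ⟨j', hj'⟩ < w⁻¹ ⟨j, hj⟩ := by
    intro j j' hj hj' hb ha hlt
    have h1 : w⁻¹ ⟨j', hj'⟩ ≤ w⁻¹ ⟨j + 1, by omega⟩ :=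
      mono (j' - (j + 1)) (j + 1) j' (by omega) hj' (by omega) ha (by omega)
    exact lt_of_le_of_lt h1 (step j (by omega) hb (by omega))
  have hwa : (⟨(w a).val, (w a).isLt⟩ : Fin n) = w a := Fin.eta _ _
  have hwb : (⟨(w b).val, (w b).isLt⟩ : Fin n) = w b := Fin.eta _ _
  have hwd : (⟨(w d).val, (w d).isLt⟩ : Fin n) = w d := Fin.eta _ _
  have had : a < d := by
    have := mono' (w d).val (w a).val (w d).isLt (w a).isLt (le_of_lt h1) (le_refl _) h2
    rw [hwa, hwd] at this
    simpa using this
  have hdb : d < b := by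
    have := mono' (w b).val (w d).val (w b).isLt (w d).isLt (le_refl _) (le_of_lt h2) h1
    rw [hwb, hwd] at this
    simpa using this
  rcases hd with h | h
  · exact absurd had (not_lt.mpr (le_of_lt h))
  · exact absurd hdb (not_lt.mpr (le_of_lt h))

lemma closure_pres {n : ℕ} (w : Perm (Fin n)) (m : ℕ) (hm : m + 1 < n)
    (hnd : w⁻¹ ⟨m, Nat.lt_of_succ_lt hm⟩ < w⁻¹ ⟨m + 1, hm⟩)
    {v : Perm (Fin n)} (hv : v ∈ Subgroup.closure (descentGens w)) :
    ∀ x : Fin n, ((v x).val ≤ m ↔ x.val ≤ m) := by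
  refine Subgroup.closure_induction
    (p := fun u _ => ∀ x : Fin n, ((u x).val ≤ m ↔ x.val ≤ m)) ?_ ?_ ?_ ?_ hv
  · intro u hu
    obtain ⟨i, j, hij, rfl, hdesc⟩ := hu
    have fwd : ∀ y : Fin n, y.val ≤ m → ((Equiv.swap i j) y).val ≤ m := by
      intro y hy
      rcases eq_or_ne y i with rfl | hyi
      · rw [Equiv.swap_apply_left]
        have him : (y : ℕ) ≠ m := by
          intro hE
          have hieq : y = ⟨m, Nat.lt_of_succ_lt hm⟩ := Fin.ext hE
          have hjeq : j = ⟨m + 1, hm⟩ := Fin.ext (show (j:ℕ) = m + 1 by omega)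
          rw [hieq, hjeq] at hdesc
          exact absurd hnd (not_lt.mpr (le_of_lt hdesc))
        omega
      rcases eq_or_ne y j with rfl | hyj
      · rw [Equiv.swap_apply_right]; omega
      · rw [Equiv.swap_apply_of_ne_of_ne hyi hyj]; exact hy
    intro x
    constructor
    · intro hx
      have := fwd ((Equiv.swap i j) x) hx
      simpa using this
    · exact fwd x
  · intro x; simp
  · intro u u' _ _ hu hu' x
    simp only [Perm.mul_apply]
    exact (hu (u' x)).trans (hu' x)
  · intro u _ hu x
    have := (hu (u⁻¹ x)).symm
    simpa using this

lemma key_lemma {n : ℕ} (w v : Perm (Fin n))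
    (hv : v ∈ Subgroup.closure (descentGens w))
    (a b c : Fin n) (hab : a < b) (hbc : b < c)
    (hba : w b < w a) (hcb : w c < w b)
    (d : Fin n) (hd : d < a ∨ b < d) (hdb : w b < w d) (hda : w d < w a)
    (e : Fin n) (he : e < b ∨ c < e) (hec : w c < w e) (heb : w e < w b) :
    ContainsPat (v * w) pat321 := by
  obtain ⟨m1, hm1, hb1, ha1, hnd1⟩ := sep_aux w a b d hab hd hdb hda
  obtain ⟨m2, hm2, hb2, ha2, hnd2⟩ := sep_aux w b c e hbc he hec heb
  have pres1 := closure_pres w m1 hm1 hnd1 hv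
  have pres2 := closure_pres w m2 hm2 hnd2 hv
  have hvba : v (w b) < v (w a) := by
    have h1 : (v (w b)).val ≤ m1 := (pres1 (w b)).mpr hb1
    have h2 : ¬ (v (w a)).val ≤ m1 := fun hcon => by
      have := (pres1 (w a)).mp hcon; omega
    exact Fin.lt_def.mpr (by omega)
  have hvcb : v (w c) < v (w b) := by
    have h1 : (v (w c)).val ≤ m2 := (pres2 (w c)).mpr hb2
    have h2 : ¬ (v (w b)).val ≤ m2 := fun hcon => by
      have := (pres2 (w b)).mp hcon; omega
    exact Fin.lt_def.mpr (by omega)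
  have hvca : v (w c) < v (w a) := hvcb.trans hvba
  refine ⟨![a, b, c], ?_, ?_⟩
  · intro i j hij
    fin_cases i <;> fin_cases j <;>
      first
        | exact absurd hij (by decide)
        | exact hab
        | exact hbc
        | exact hab.trans hbc
  · intro i j
    fin_cases i <;> fin_cases j
    · exact ⟨fun h => absurd h (by decide), fun h => absurd h (lt_irrefl _)⟩
    · exact ⟨fun h => absurd h (by decide), fun h => absurd h (not_lt.mpr (le_of_lt hvba))⟩
    · exact ⟨fun h => absurd h (by decide), fun h => absurd h (not_lt.mpr (le_of_lt hvca))⟩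
    · exact ⟨fun _ => hvba, fun _ => by decide⟩
    · exact ⟨fun h => absurd h (by decide), fun h => absurd h (lt_irrefl _)⟩
    · exact ⟨fun h => absurd h (by decide), fun h => absurd h (not_lt.mpr (le_of_lt hvcb))⟩
    · exact ⟨fun _ => hvca, fun _ => by decide⟩
    · exact ⟨fun _ => hvcb, fun _ => by decide⟩
    · exact ⟨fun h => absurd h (by decide), fun h => absurd h (lt_irrefl _)⟩
lemma from_pattern {n : ℕ} (w v : Perm (Fin n))
    (hv : v ∈ Subgroup.closure (descentGens w))
    (q : List ℕ) (hc : ContainsPat w q)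
    (i5 i3 i1 i4 i2 : Fin q.length)
    (h53 : i5 < i3) (h31 : i3 < i1)
    (h4 : i4 < i5 ∨ i3 < i4) (h2 : i2 < i3 ∨ i1 < i2)
    (g35 : q.get i3 < q.get i5) (g13 : q.get i1 < q.get i3)
    (g34 : q.get i3 < q.get i4) (g45 : q.get i4 < q.get i5)
    (g12 : q.get i1 < q.get i2) (g23 : q.get i2 < q.get i3) :
    ContainsPat (v * w) pat321 := by
  obtain ⟨f, hf, hiff⟩ := hc
  exact key_lemma w v hv (f i5) (f i3) (f i1) (hf h53) (hf h31)
    ((hiff i3 i5).mp g35) ((hiff i1 i3).mp g13)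
    (f i4) (h4.imp (fun h => hf h) (fun h => hf h))
    ((hiff i3 i4).mp g34) ((hiff i4 i5).mp g45)
    (f i2) (h2.imp (fun h => hf h) (fun h => hf h))
    ((hiff i1 i2).mp g12) ((hiff i2 i3).mp g23)


theorem stmt13 (n : ℕ) (w : Perm (Fin n)) (h : ∃ q ∈ P321L, ContainsPat w q)
    (v : Perm (Fin n)) (hv : IsW0J w v) :
    ContainsPat (v * w) pat321 := by
  obtain ⟨q, hq, hc⟩ := h
  simp only [P321L, List.mem_cons, List.not_mem_nil, or_false] at hq
  rcases hq with rfl | rfl | rfl | rfl | rfl | rfl | rfl | rfl | rfl | rfl | rfl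
  · exact from_pattern w v hv.1 _ hc ⟨2, by decide⟩ ⟨3, by decide⟩ ⟨4, by decide⟩ ⟨1, by decide⟩ ⟨0, by decide⟩
      (by decide) (by decide) (by decide) (by decide) (by decide)
      (by decide) (by decide) (by decide) (by decide) (by decide)
  · exact from_pattern w v hv.1 _ hc ⟨1, by decide⟩ ⟨2, by decide⟩ ⟨3, by decide⟩ ⟨4, by decide⟩ ⟨0, by decide⟩
      (by decide) (by decide) (by decide) (by decide) (by decide)
      (by decide) (by decide) (by decide) (by decide) (by decide)
  · exact from_pattern w v hv.1 _ hc ⟨1, by decide⟩ ⟨2, by decide⟩ ⟨4, by decide⟩ ⟨3, by decide⟩ ⟨0, by decide⟩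
      (by decide) (by decide) (by decide) (by decide) (by decide)
      (by decide) (by decide) (by decide) (by decide) (by decide)
  · exact from_pattern w v hv.1 _ hc ⟨2, by decide⟩ ⟨3, by decide⟩ ⟨4, by decide⟩ ⟨0, by decide⟩ ⟨1, by decide⟩
      (by decide) (by decide) (by decide) (by decide) (by decide)
      (by decide) (by decide) (by decide) (by decide) (by decide)
  · exact from_pattern w v hv.1 _ hc ⟨1, by decide⟩ ⟨3, by decide⟩ ⟨4, by decide⟩ ⟨0, by decide⟩ ⟨2, by decide⟩
      (by decide) (by decide) (by decide) (by decide) (by decide)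
      (by decide) (by decide) (by decide) (by decide) (by decide)
  · exact from_pattern w v hv.1 _ hc ⟨1, by decide⟩ ⟨2, by decide⟩ ⟨3, by decide⟩ ⟨0, by decide⟩ ⟨4, by decide⟩
      (by decide) (by decide) (by decide) (by decide) (by decide)
      (by decide) (by decide) (by decide) (by decide) (by decide)
  · exact from_pattern w v hv.1 _ hc ⟨0, by decide⟩ ⟨2, by decide⟩ ⟨3, by decide⟩ ⟨4, by decide⟩ ⟨1, by decide⟩
      (by decide) (by decide) (by decide) (by decide) (by decide)
      (by decide) (by decide) (by decide) (by decide) (by decide)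
  · exact from_pattern w v hv.1 _ hc ⟨0, by decide⟩ ⟨2, by decide⟩ ⟨4, by decide⟩ ⟨3, by decide⟩ ⟨1, by decide⟩
      (by decide) (by decide) (by decide) (by decide) (by decide)
      (by decide) (by decide) (by decide) (by decide) (by decide)
  · exact from_pattern w v hv.1 _ hc ⟨0, by decide⟩ ⟨1, by decide⟩ ⟨2, by decide⟩ ⟨4, by decide⟩ ⟨3, by decide⟩
      (by decide) (by decide) (by decide) (by decide) (by decide)
      (by decide) (by decide) (by decide) (by decide) (by decide)
  · exact from_pattern w v hv.1 _ hc ⟨0, by decide⟩ ⟨1, by decide⟩ ⟨2, by decide⟩ ⟨3, by decide⟩ ⟨4, by decide⟩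
      (by decide) (by decide) (by decide) (by decide) (by decide)
      (by decide) (by decide) (by decide) (by decide) (by decide)
  · exact from_pattern w v hv.1 _ hc ⟨0, by decide⟩ ⟨1, by decide⟩ ⟨3, by decide⟩ ⟨2, by decide⟩ ⟨4, by decide⟩
      (by decide) (by decide) (by decide) (by decide) (by decide)
      (by decide) (by decide) (by decide) (by decide) (by decide)
end

section
/- If a permutation w ∈ S_n contains a pattern p from P^{3412} = {34512, 34521, 35412, 35421, 45123, 45213, 45231, 53412, 53421, 54123, 54213, 54231}, then w_0(J(w))·w contains the pattern 321 or the pattern 3412 (i.e., is not Boolean). -/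
open Equiv

-- natural descent predicate
def DesN {n : ℕ} (w : Perm (Fin n)) (i : ℕ) : Prop :=
  ∃ h : i + 1 < n, w⁻¹ ⟨i+1, h⟩ < w⁻¹ ⟨i, Nat.lt_of_succ_lt h⟩

lemma aux_swap_mono {n : ℕ} {a b p q : Fin n} (hab : (a:ℕ)+1 = b) (hpq : p < q)
    (hne : ¬(p = a ∧ q = b)) : Equiv.swap a b p < Equiv.swap a b q := by
  have hpq' : (p:ℕ) < q := hpq
  rcases eq_or_ne p a with rfl|hpa
  · rcases eq_or_ne q b with rfl|hqb
    · exact absurd ⟨rfl, rfl⟩ hne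
    · have hqa : q ≠ p := fun h => absurd (h ▸ hpq) (lt_irrefl _)
      have hq' : (q:ℕ) ≠ b := fun h => hqb (Fin.ext h)
      rw [Equiv.swap_apply_left, Equiv.swap_apply_of_ne_of_ne hqa hqb]
      show (b:ℕ) < q; omega
  · rcases eq_or_ne q b with rfl|hqb
    · have hpb : p ≠ q := hpq.ne
      rw [Equiv.swap_apply_right, Equiv.swap_apply_of_ne_of_ne hpa hpb]
      show (p:ℕ) < a
      have : (p:ℕ) ≠ a := fun h => hpa (Fin.ext h)
      omega
    · rcases eq_or_ne p b with rfl|hpb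
      · have hqa : q ≠ a := fun h => by
          have : (q:ℕ) = a := by rw [h]
          omega
        rw [Equiv.swap_apply_right, Equiv.swap_apply_of_ne_of_ne hqa hqb]
        show (a:ℕ) < q; omega
      · rcases eq_or_ne q a with rfl|hqa
        · rw [Equiv.swap_apply_left, Equiv.swap_apply_of_ne_of_ne hpa hpb]
          show (p:ℕ) < b; omega
        · rw [Equiv.swap_apply_of_ne_of_ne hpa hpb, Equiv.swap_apply_of_ne_of_ne hqa hqb]
          exact hpq

lemma aux_len_mul_adj {n : ℕ} (u : Perm (Fin n)) {a b : Fin n} (hab : (a:ℕ)+1 = b)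
    (h : u a < u b) : len (u * Equiv.swap a b) = len u + 1 := by
  classical
  have hablt : a < b := by show (a:ℕ) < b; omega
  set s := Equiv.swap a b with hs
  have hss : ∀ x, s (s x) = x := fun x => Equiv.swap_apply_self a b x
  set F := Finset.univ.filter (fun qq : Fin n × Fin n => qq.1 < qq.2 ∧ (u*s) qq.2 < (u*s) qq.1) with hF
  set G := Finset.univ.filter (fun qq : Fin n × Fin n => qq.1 < qq.2 ∧ u qq.2 < u qq.1) with hG
  have habF : ((a,b) : Fin n × Fin n) ∈ F := by
    rw [hF, Finset.mem_filter]
    refine ⟨Finset.mem_univ _, hablt, ?_⟩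
    show u (s b) < u (s a)
    rw [hs, Equiv.swap_apply_left, Equiv.swap_apply_right]
    exact h
  have key : (F.erase (a,b)).card = G.card := by
    apply Finset.card_bij' (fun qq _ => (s qq.1, s qq.2)) (fun qq _ => (s qq.1, s qq.2))
    · intro qq hqq
      rw [Finset.mem_erase, hF, Finset.mem_filter] at hqq
      obtain ⟨hne, -, h1, h2⟩ := hqq
      rw [hG, Finset.mem_filter]
      refine ⟨Finset.mem_univ _, ?_, ?_⟩
      · apply aux_swap_mono hab h1
        intro ⟨e1, e2⟩; exact hne (Prod.ext e1 e2)
      · show u (s qq.2) < u (s qq.1)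
        exact h2
    · intro qq hqq
      rw [hG, Finset.mem_filter] at hqq
      obtain ⟨-, h1, h2⟩ := hqq
      rw [Finset.mem_erase, hF, Finset.mem_filter]
      have hnab : ¬(qq.1 = a ∧ qq.2 = b) := by
        rintro ⟨e1, e2⟩; rw [e1, e2] at h2; exact absurd h2 (asymm h)
      refine ⟨?_, Finset.mem_univ _, aux_swap_mono hab h1 hnab, ?_⟩
      · intro hcon
        have e1 : s qq.1 = a := congrArg Prod.fst hcon
        have e2 : s qq.2 = b := congrArg Prod.snd hcon
        have hb : qq.1 = b := by
          have h3 := congrArg s e1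
          rw [hss] at h3
          rw [h3, hs, Equiv.swap_apply_left]
        have ha : qq.2 = a := by
          have h3 := congrArg s e2
          rw [hss] at h3
          rw [h3, hs, Equiv.swap_apply_right]
        rw [hb, ha] at h1
        exact absurd hablt (asymm h1)
      · show u (s (s qq.2)) < u (s (s qq.1))
        rw [hss, hss]; exact h2
    · intro qq _; exact Prod.ext (hss _) (hss _)
    · intro qq _; exact Prod.ext (hss _) (hss _)
  have hF1 : len (u*s) = F.card := rfl
  have hG1 : len u = G.card := rfl
  rw [hF1, hG1, ← Finset.card_erase_add_one habF, key]

lemma aux_closure_preserves {n : ℕ} {w v : Perm (Fin n)}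
    (hv : v ∈ Subgroup.closure (descentGens w)) (i : ℕ) (hD : ¬ DesN w i) :
    ∀ x : Fin n, ((v x : ℕ) ≤ i ↔ (x : ℕ) ≤ i) := by
  induction hv using Subgroup.closure_induction with
  | mem u hu =>
    obtain ⟨a, b, hab, rfl, hba⟩ := hu
    have hai : (a:ℕ) ≠ i := by
      intro hae
      apply hD
      refine ⟨by omega, ?_⟩
      have ea : (⟨i, by omega⟩ : Fin n) = a := Fin.ext hae.symm
      have eb : (⟨i+1, by omega⟩ : Fin n) = b := Fin.ext (show i+1 = (b:ℕ) by omega)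
      rw [ea, eb]
      exact hba
    intro x
    rcases eq_or_ne x a with rfl|hxa
    · rw [Equiv.swap_apply_left]; omega
    · rcases eq_or_ne x b with rfl|hxb
      · rw [Equiv.swap_apply_right]; omega
      · rw [Equiv.swap_apply_of_ne_of_ne hxa hxb]
  | one => simp
  | mul u₁ u₂ hu₁ hu₂ ih₁ ih₂ =>
    intro x
    rw [Equiv.Perm.mul_apply]
    exact (ih₁ (u₂ x)).trans (ih₂ x)
  | inv u hu ih =>
    intro x
    have h := ih (u⁻¹ x)
    rw [Equiv.Perm.coe_inv, Equiv.apply_symm_apply] at h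
    exact h.symm

lemma aux_desc_rev {n : ℕ} {w v : Perm (Fin n)} (hv : IsW0J w v) {i : ℕ}
    (hi : i + 1 < n)
    (hD : w⁻¹ ⟨i+1, hi⟩ < w⁻¹ ⟨i, Nat.lt_of_succ_lt hi⟩) :
    v ⟨i+1, hi⟩ < v ⟨i, Nat.lt_of_succ_lt hi⟩ := by
  set a : Fin n := ⟨i, Nat.lt_of_succ_lt hi⟩ with ha
  set b : Fin n := ⟨i+1, hi⟩ with hb
  have hsmem : Equiv.swap a b ∈ descentGens w := ⟨a, b, rfl, rfl, hD⟩
  have hcl : v * Equiv.swap a b ∈ Subgroup.closure (descentGens w) :=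
    mul_mem hv.1 (Subgroup.subset_closure hsmem)
  by_contra hcon
  have hne : v a ≠ v b := v.injective.ne (by rw [ha, hb]; intro hcc; rw [Fin.mk.injEq] at hcc; omega)
  have hlt2 : v a < v b := lt_of_le_of_ne (not_lt.1 hcon) hne
  have hlen := aux_len_mul_adj v (show (a:ℕ)+1 = b from rfl) hlt2
  have := hv.2 _ hcl
  omega

lemma aux_chain_rev {n : ℕ} {w v : Perm (Fin n)} (hv : IsW0J w v) :
    ∀ (k : ℕ) (x : Fin n) (hk : (x:ℕ) + k + 1 < n),
      (∀ i : ℕ, (x:ℕ) ≤ i → i < (x:ℕ) + k + 1 → DesN w i) →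
      v ⟨(x:ℕ) + k + 1, hk⟩ < v x ∧ w⁻¹ ⟨(x:ℕ) + k + 1, hk⟩ < w⁻¹ x := by
  intro k
  induction k with
  | zero =>
    intro x hk hD
    obtain ⟨h1, h2⟩ := hD (x:ℕ) le_rfl (by omega)
    have ex : (⟨(x:ℕ), Nat.lt_of_succ_lt h1⟩ : Fin n) = x := Fin.ext rfl
    constructor
    · have := aux_desc_rev hv h1 h2
      rw [ex] at this
      exact this
    · rw [ex] at h2
      exact h2
  | succ k ih =>
    intro x hk hD
    have hk' : (x:ℕ) + k + 1 < n := by omega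
    obtain ⟨ihv, ihw⟩ := ih x hk' (fun i h1 h2 => hD i h1 (by omega))
    obtain ⟨h1, h2⟩ := hD ((x:ℕ) + k + 1) (by omega) (by omega)
    constructor
    · exact lt_trans (aux_desc_rev hv h1 h2) ihv
    · exact lt_trans h2 ihw

lemma aux_fact1 {n : ℕ} {w v : Perm (Fin n)} (hv : IsW0J w v) {p q : Fin n}
    (hpq : p < q) (hw : w p < w q) : (v*w) p < (v*w) q := by
  have hwv : (w p : ℕ) < w q := hw
  have hqlt := (w q).isLt
  by_cases hall : ∀ i : ℕ, (w p : ℕ) ≤ i → i < (w q : ℕ) → DesN w i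
  · exfalso
    have hk : (w p : ℕ) + ((w q:ℕ) - (w p:ℕ) - 1) + 1 < n := by omega
    obtain ⟨-, h2⟩ := aux_chain_rev hv ((w q:ℕ) - (w p:ℕ) - 1) (w p) hk
      (fun i h1 h2 => hall i h1 (by omega))
    have e : (⟨(w p:ℕ) + ((w q:ℕ)-(w p:ℕ)-1) + 1, hk⟩ : Fin n) = w q :=
      Fin.ext (show (w p:ℕ) + ((w q:ℕ)-(w p:ℕ)-1) + 1 = (w q : ℕ) by omega)
    rw [e, Equiv.Perm.coe_inv, Equiv.symm_apply_apply, Equiv.symm_apply_apply] at h2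
    exact absurd hpq (asymm h2)
  · push_neg at hall
    obtain ⟨i, h1, h2, hnd⟩ := hall
    have hx := (aux_closure_preserves hv.1 i hnd (w p)).mpr h1
    have hy := aux_closure_preserves hv.1 i hnd (w q)
    show v (w p) < v (w q)
    show (v (w p) : ℕ) < (v (w q) : ℕ)
    omega

lemma aux_fact2 {n : ℕ} {w v : Perm (Fin n)} (hv : IsW0J w v) {p q r : Fin n}
    (h1 : w p < w q) (h2 : w q < w r) (h : (v*w) r < (v*w) p) :
    (v*w) q < (v*w) p ∧ (v*w) r < (v*w) q := by
  have hv1 : (w p : ℕ) < w q := h1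
  have hv2 : (w q : ℕ) < w r := h2
  have hrlt := (w r).isLt
  have hall : ∀ i : ℕ, (w p : ℕ) ≤ i → i < (w r : ℕ) → DesN w i := by
    by_contra hc
    push_neg at hc
    obtain ⟨i, ha, hb, hnd⟩ := hc
    have hx := (aux_closure_preserves hv.1 i hnd (w p)).mpr ha
    have hy := aux_closure_preserves hv.1 i hnd (w r)
    have : (v*w) p < (v*w) r := by
      show (v (w p) : ℕ) < (v (w r) : ℕ)
      omega
    exact absurd h (asymm this)
  constructor
  · have hk : (w p : ℕ) + ((w q:ℕ) - (w p:ℕ) - 1) + 1 < n := by omega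
    obtain ⟨hvv, -⟩ := aux_chain_rev hv ((w q:ℕ) - (w p:ℕ) - 1) (w p) hk
      (fun i ha hb => hall i ha (by omega))
    have e : (⟨(w p:ℕ) + ((w q:ℕ)-(w p:ℕ)-1) + 1, hk⟩ : Fin n) = w q :=
      Fin.ext (show (w p:ℕ) + ((w q:ℕ)-(w p:ℕ)-1) + 1 = (w q : ℕ) by omega)
    rw [e] at hvv
    exact hvv
  · have hk : (w q : ℕ) + ((w r:ℕ) - (w q:ℕ) - 1) + 1 < n := by omega
    obtain ⟨hvv, -⟩ := aux_chain_rev hv ((w r:ℕ) - (w q:ℕ) - 1) (w q) hk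
      (fun i ha hb => hall i (by omega) (by omega))
    have e : (⟨(w q:ℕ) + ((w r:ℕ)-(w q:ℕ)-1) + 1, hk⟩ : Fin n) = w r :=
      Fin.ext (show (w q:ℕ) + ((w r:ℕ)-(w q:ℕ)-1) + 1 = (w r : ℕ) by omega)
    rw [e] at hvv
    exact hvv

lemma aux_fact2l {n : ℕ} {w v : Perm (Fin n)} (hv : IsW0J w v) {p q r : Fin n}
    (h1 : w p < w q) (h2 : w q < w r) (hpq : (v*w) p < (v*w) q) :
    (v*w) p < (v*w) r := by
  by_contra hc
  have hne : (v*w) p ≠ (v*w) r := (v*w).injective.ne (fun e => absurd (e ▸ (h1.trans h2)) (lt_irrefl _))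
  have hlt : (v*w) r < (v*w) p := lt_of_le_of_ne (not_lt.1 hc) hne.symm
  exact absurd (aux_fact2 hv h1 h2 hlt).1 (asymm hpq)

lemma aux_fact2r {n : ℕ} {w v : Perm (Fin n)} (hv : IsW0J w v) {p q r : Fin n}
    (h1 : w p < w q) (h2 : w q < w r) (hqr : (v*w) q < (v*w) r) :
    (v*w) p < (v*w) r := by
  by_contra hc
  have hne : (v*w) p ≠ (v*w) r := (v*w).injective.ne (fun e => absurd (e ▸ (h1.trans h2)) (lt_irrefl _))
  have hlt : (v*w) r < (v*w) p := lt_of_le_of_ne (not_lt.1 hc) hne.symm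
  exact absurd (aux_fact2 hv h1 h2 hlt).2 (asymm hqr)

lemma aux_c321 {n : ℕ} (u : Perm (Fin n)) {a b c : Fin n} (hab : a < b) (hbc : b < c)
    (h1 : u b < u a) (h2 : u c < u b) : ContainsPat u pat321 := by
  have hac : a < c := hab.trans hbc
  refine ⟨![a, b, c], ?_, ?_⟩
  · intro i j hij
    fin_cases i <;> fin_cases j <;>
      first
        | exact absurd hij (by decide)
        | exact hab
        | exact hbc
        | exact hac
  · intro i j
    fin_cases i <;> fin_cases j
    · exact iff_of_false (by decide) (lt_irrefl _)
    · exact iff_of_false (by decide) (asymm h1)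
    · exact iff_of_false (by decide) (asymm (h2.trans h1))
    · exact iff_of_true (by decide) h1
    · exact iff_of_false (by decide) (lt_irrefl _)
    · exact iff_of_false (by decide) (asymm h2)
    · exact iff_of_true (by decide) (h2.trans h1)
    · exact iff_of_true (by decide) h2
    · exact iff_of_false (by decide) (lt_irrefl _)

lemma aux_c3412 {n : ℕ} (u : Perm (Fin n)) {a b c d : Fin n}
    (hab : a < b) (hbc : b < c) (hcd : c < d)
    (h1 : u a < u b) (h2 : u c < u d) (h3 : u d < u a) : ContainsPat u pat3412 := by
  have hac : a < c := hab.trans hbc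
  have hbd : b < d := hbc.trans hcd
  have had : a < d := hab.trans hbd
  have hca : u c < u a := h2.trans h3
  have hcb : u c < u b := hca.trans h1
  have hda : u d < u a := h3
  have hdb : u d < u b := h3.trans h1
  refine ⟨![a, b, c, d], ?_, ?_⟩
  · intro i j hij
    fin_cases i <;> fin_cases j <;>
      first
        | exact absurd hij (by decide)
        | exact hab
        | exact hbc
        | exact hcd
        | exact hac
        | exact hbd
        | exact had
  · intro i j
    fin_cases i <;> fin_cases j
    · exact iff_of_false (by decide) (lt_irrefl _)
    · exact iff_of_true (by decide) h1
    · exact iff_of_false (by decide) (asymm hca)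
    · exact iff_of_false (by decide) (asymm hda)
    · exact iff_of_false (by decide) (asymm h1)
    · exact iff_of_false (by decide) (lt_irrefl _)
    · exact iff_of_false (by decide) (asymm hcb)
    · exact iff_of_false (by decide) (asymm hdb)
    · exact iff_of_true (by decide) hca
    · exact iff_of_true (by decide) hcb
    · exact iff_of_false (by decide) (lt_irrefl _)
    · exact iff_of_true (by decide) h2
    · exact iff_of_true (by decide) hda
    · exact iff_of_true (by decide) hdb
    · exact iff_of_false (by decide) (asymm h2)
    · exact iff_of_false (by decide) (lt_irrefl _)

theorem stmt14 (n : ℕ) (w : Perm (Fin n)) (h : ∃ q ∈ P3412L, ContainsPat w q)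
    (v : Perm (Fin n)) (hv : IsW0J w v) :
    ContainsPat (v * w) pat321 ∨ ContainsPat (v * w) pat3412 := by
  classical
  have tri : ∀ p q : Fin n, p ≠ q → (v*w) p < (v*w) q ∨ (v*w) q < (v*w) p :=
    fun p q hne => lt_or_gt_of_ne (fun e => hne ((v*w).injective e))
  obtain ⟨q, hq, hc⟩ := h
  simp only [P3412L, List.mem_cons, List.not_mem_nil, or_false] at hq
  rcases hq with rfl|rfl|rfl|rfl|rfl|rfl|rfl|rfl|rfl|rfl|rfl|rfl
  · have hc5 : ∃ g : Fin 5 → Fin n, StrictMono g ∧ ∀ i j : Fin 5,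
        ([3,4,5,1,2] : List ℕ).get i < ([3,4,5,1,2] : List ℕ).get j ↔ w (g i) < w (g j) := hc
    obtain ⟨f, hf, hcmp⟩ := hc5
    have p01 : f 0 < f 1 := hf (by decide)
    have p12 : f 1 < f 2 := hf (by decide)
    have p23 : f 2 < f 3 := hf (by decide)
    have p34 : f 3 < f 4 := hf (by decide)
    have w01 : w (f 0) < w (f 1) := (hcmp 0 1).mp (by decide)
    have w12 : w (f 1) < w (f 2) := (hcmp 1 2).mp (by decide)
    have w34 : w (f 3) < w (f 4) := (hcmp 3 4).mp (by decide)
    have w40 : w (f 4) < w (f 0) := (hcmp 4 0).mp (by decide)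
    have u01 := aux_fact1 hv p01 w01
    have u12 := aux_fact1 hv p12 w12
    have u34 := aux_fact1 hv p34 w34
    have u41 := aux_fact2r hv w40 w01 u01
    exact Or.inr (aux_c3412 (v*w) p12 p23 p34 u12 u34 u41)
  · have hc5 : ∃ g : Fin 5 → Fin n, StrictMono g ∧ ∀ i j : Fin 5,
        ([3,4,5,2,1] : List ℕ).get i < ([3,4,5,2,1] : List ℕ).get j ↔ w (g i) < w (g j) := hc
    obtain ⟨f, hf, hcmp⟩ := hc5
    have p01 : f 0 < f 1 := hf (by decide)
    have p12 : f 1 < f 2 := hf (by decide)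
    have p23 : f 2 < f 3 := hf (by decide)
    have p34 : f 3 < f 4 := hf (by decide)
    have w01 : w (f 0) < w (f 1) := (hcmp 0 1).mp (by decide)
    have w12 : w (f 1) < w (f 2) := (hcmp 1 2).mp (by decide)
    have w30 : w (f 3) < w (f 0) := (hcmp 3 0).mp (by decide)
    have w43 : w (f 4) < w (f 3) := (hcmp 4 3).mp (by decide)
    have u01 := aux_fact1 hv p01 w01
    have u12 := aux_fact1 hv p12 w12
    have u32 := aux_fact2r hv (w30.trans w01) w12 u12
    have u41 := aux_fact2r hv (w43.trans w30) w01 u01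
    rcases tri (f 3) (f 4) p34.ne with h|h
    · exact Or.inr (aux_c3412 (v*w) p12 p23 p34 u12 h u41)
    · exact Or.inl (aux_c321 (v*w) p23 p34 u32 h)
  · have hc5 : ∃ g : Fin 5 → Fin n, StrictMono g ∧ ∀ i j : Fin 5,
        ([3,5,4,1,2] : List ℕ).get i < ([3,5,4,1,2] : List ℕ).get j ↔ w (g i) < w (g j) := hc
    obtain ⟨f, hf, hcmp⟩ := hc5
    have p01 : f 0 < f 1 := hf (by decide)
    have p12 : f 1 < f 2 := hf (by decide)
    have p23 : f 2 < f 3 := hf (by decide)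
    have p34 : f 3 < f 4 := hf (by decide)
    have w02 : w (f 0) < w (f 2) := (hcmp 0 2).mp (by decide)
    have w21 : w (f 2) < w (f 1) := (hcmp 2 1).mp (by decide)
    have w34 : w (f 3) < w (f 4) := (hcmp 3 4).mp (by decide)
    have w40 : w (f 4) < w (f 0) := (hcmp 4 0).mp (by decide)
    have p02 := p01.trans p12
    have u02 := aux_fact1 hv p02 w02
    have u34 := aux_fact1 hv p34 w34
    have u42 := aux_fact2r hv w40 w02 u02
    have u41 := aux_fact2l hv (w40.trans w02) w21 u42
    have u32 := u34.trans u42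
    rcases tri (f 1) (f 2) p12.ne with h|h
    · exact Or.inr (aux_c3412 (v*w) p12 p23 p34 h u34 u41)
    · exact Or.inl (aux_c321 (v*w) p12 p23 h u32)
  · have hc5 : ∃ g : Fin 5 → Fin n, StrictMono g ∧ ∀ i j : Fin 5,
        ([3,5,4,2,1] : List ℕ).get i < ([3,5,4,2,1] : List ℕ).get j ↔ w (g i) < w (g j) := hc
    obtain ⟨f, hf, hcmp⟩ := hc5
    have p01 : f 0 < f 1 := hf (by decide)
    have p12 : f 1 < f 2 := hf (by decide)
    have p23 : f 2 < f 3 := hf (by decide)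
    have p34 : f 3 < f 4 := hf (by decide)
    have w02 : w (f 0) < w (f 2) := (hcmp 0 2).mp (by decide)
    have w21 : w (f 2) < w (f 1) := (hcmp 2 1).mp (by decide)
    have w30 : w (f 3) < w (f 0) := (hcmp 3 0).mp (by decide)
    have w43 : w (f 4) < w (f 3) := (hcmp 4 3).mp (by decide)
    have p02 := p01.trans p12
    have u02 := aux_fact1 hv p02 w02
    have u32 := aux_fact2r hv w30 w02 u02
    have u42 := aux_fact2r hv (w43.trans w30) w02 u02
    have u41 := aux_fact2l hv ((w43.trans w30).trans w02) w21 u42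
    rcases tri (f 1) (f 2) p12.ne with h|h
    · rcases tri (f 3) (f 4) p34.ne with h2|h2
      · exact Or.inr (aux_c3412 (v*w) p12 p23 p34 h h2 u41)
      · exact Or.inl (aux_c321 (v*w) p23 p34 u32 h2)
    · exact Or.inl (aux_c321 (v*w) p12 p23 h u32)
  · have hc5 : ∃ g : Fin 5 → Fin n, StrictMono g ∧ ∀ i j : Fin 5,
        ([4,5,1,2,3] : List ℕ).get i < ([4,5,1,2,3] : List ℕ).get j ↔ w (g i) < w (g j) := hc
    obtain ⟨f, hf, hcmp⟩ := hc5
    have p01 : f 0 < f 1 := hf (by decide)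
    have p12 : f 1 < f 2 := hf (by decide)
    have p23 : f 2 < f 3 := hf (by decide)
    have p34 : f 3 < f 4 := hf (by decide)
    have w01 : w (f 0) < w (f 1) := (hcmp 0 1).mp (by decide)
    have w23 : w (f 2) < w (f 3) := (hcmp 2 3).mp (by decide)
    have w34 : w (f 3) < w (f 4) := (hcmp 3 4).mp (by decide)
    have w40 : w (f 4) < w (f 0) := (hcmp 4 0).mp (by decide)
    have u01 := aux_fact1 hv p01 w01
    have u23 := aux_fact1 hv p23 w23
    have u34 := aux_fact1 hv p34 w34
    have u30 := aux_fact2l hv w34 w40 u34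
    exact Or.inr (aux_c3412 (v*w) p01 p12 p23 u01 u23 u30)
  · have hc5 : ∃ g : Fin 5 → Fin n, StrictMono g ∧ ∀ i j : Fin 5,
        ([4,5,2,1,3] : List ℕ).get i < ([4,5,2,1,3] : List ℕ).get j ↔ w (g i) < w (g j) := hc
    obtain ⟨f, hf, hcmp⟩ := hc5
    have p01 : f 0 < f 1 := hf (by decide)
    have p12 : f 1 < f 2 := hf (by decide)
    have p23 : f 2 < f 3 := hf (by decide)
    have p34 : f 3 < f 4 := hf (by decide)
    have w01 : w (f 0) < w (f 1) := (hcmp 0 1).mp (by decide)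
    have w24 : w (f 2) < w (f 4) := (hcmp 2 4).mp (by decide)
    have w32 : w (f 3) < w (f 2) := (hcmp 3 2).mp (by decide)
    have w40 : w (f 4) < w (f 0) := (hcmp 4 0).mp (by decide)
    have p24 := p23.trans p34
    have u01 := aux_fact1 hv p01 w01
    have u24 := aux_fact1 hv p24 w24
    have u34 := aux_fact1 hv p34 (w32.trans w24)
    have u30 := aux_fact2l hv (w32.trans w24) w40 u34
    have u20 := aux_fact2l hv w24 w40 u24
    have u21 := aux_fact2l hv (w24.trans w40) w01 u20
    rcases tri (f 2) (f 3) p23.ne with h|h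
    · exact Or.inr (aux_c3412 (v*w) p01 p12 p23 u01 h u30)
    · exact Or.inl (aux_c321 (v*w) p12 p23 u21 h)
  · have hc5 : ∃ g : Fin 5 → Fin n, StrictMono g ∧ ∀ i j : Fin 5,
        ([4,5,2,3,1] : List ℕ).get i < ([4,5,2,3,1] : List ℕ).get j ↔ w (g i) < w (g j) := hc
    obtain ⟨f, hf, hcmp⟩ := hc5
    have p01 : f 0 < f 1 := hf (by decide)
    have p12 : f 1 < f 2 := hf (by decide)
    have p23 : f 2 < f 3 := hf (by decide)
    have p34 : f 3 < f 4 := hf (by decide)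
    have w01 : w (f 0) < w (f 1) := (hcmp 0 1).mp (by decide)
    have w23 : w (f 2) < w (f 3) := (hcmp 2 3).mp (by decide)
    have w30 : w (f 3) < w (f 0) := (hcmp 3 0).mp (by decide)
    have w42 : w (f 4) < w (f 2) := (hcmp 4 2).mp (by decide)
    have p13 := p12.trans p23
    have p03 := p01.trans p13
    have u01 := aux_fact1 hv p01 w01
    have u23 := aux_fact1 hv p23 w23
    have u43 := aux_fact2r hv w42 w23 u23
    have u31 := aux_fact2r hv w30 w01 u01
    rcases tri (f 0) (f 3) p03.ne with h|h
    · exact Or.inl (aux_c321 (v*w) p13 p34 u31 u43)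
    · exact Or.inr (aux_c3412 (v*w) p01 p12 p23 u01 u23 h)
  · have hc5 : ∃ g : Fin 5 → Fin n, StrictMono g ∧ ∀ i j : Fin 5,
        ([5,3,4,1,2] : List ℕ).get i < ([5,3,4,1,2] : List ℕ).get j ↔ w (g i) < w (g j) := hc
    obtain ⟨f, hf, hcmp⟩ := hc5
    have p01 : f 0 < f 1 := hf (by decide)
    have p12 : f 1 < f 2 := hf (by decide)
    have p23 : f 2 < f 3 := hf (by decide)
    have p34 : f 3 < f 4 := hf (by decide)
    have w12 : w (f 1) < w (f 2) := (hcmp 1 2).mp (by decide)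
    have w34 : w (f 3) < w (f 4) := (hcmp 3 4).mp (by decide)
    have w41 : w (f 4) < w (f 1) := (hcmp 4 1).mp (by decide)
    have w20 : w (f 2) < w (f 0) := (hcmp 2 0).mp (by decide)
    have p02 := p01.trans p12
    have u12 := aux_fact1 hv p12 w12
    have u34 := aux_fact1 hv p34 w34
    have u32 := aux_fact2r hv (w34.trans w41) w12 u12
    have u42 := aux_fact2r hv w41 w12 u12
    have u40 := aux_fact2l hv (w41.trans w12) w20 u42
    rcases tri (f 0) (f 2) p02.ne with hA|hA
    · exact Or.inr (aux_c3412 (v*w) p02 p23 p34 hA u34 u40)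
    · exact Or.inl (aux_c321 (v*w) p02 p23 hA u32)
  · have hc5 : ∃ g : Fin 5 → Fin n, StrictMono g ∧ ∀ i j : Fin 5,
        ([5,3,4,2,1] : List ℕ).get i < ([5,3,4,2,1] : List ℕ).get j ↔ w (g i) < w (g j) := hc
    obtain ⟨f, hf, hcmp⟩ := hc5
    have p01 : f 0 < f 1 := hf (by decide)
    have p12 : f 1 < f 2 := hf (by decide)
    have p23 : f 2 < f 3 := hf (by decide)
    have p34 : f 3 < f 4 := hf (by decide)
    have w12 : w (f 1) < w (f 2) := (hcmp 1 2).mp (by decide)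
    have w31 : w (f 3) < w (f 1) := (hcmp 3 1).mp (by decide)
    have w43 : w (f 4) < w (f 3) := (hcmp 4 3).mp (by decide)
    have w20 : w (f 2) < w (f 0) := (hcmp 2 0).mp (by decide)
    have p02 := p01.trans p12
    have u12 := aux_fact1 hv p12 w12
    have u32 := aux_fact2r hv w31 w12 u12
    have u42 := aux_fact2r hv (w43.trans w31) w12 u12
    have u40 := aux_fact2l hv ((w43.trans w31).trans w12) w20 u42
    rcases tri (f 3) (f 4) p34.ne with h|h
    · rcases tri (f 0) (f 2) p02.ne with hA|hA
      · exact Or.inr (aux_c3412 (v*w) p02 p23 p34 hA h u40)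
      · exact Or.inl (aux_c321 (v*w) p02 p23 hA u32)
    · exact Or.inl (aux_c321 (v*w) p23 p34 u32 h)
  · have hc5 : ∃ g : Fin 5 → Fin n, StrictMono g ∧ ∀ i j : Fin 5,
        ([5,4,1,2,3] : List ℕ).get i < ([5,4,1,2,3] : List ℕ).get j ↔ w (g i) < w (g j) := hc
    obtain ⟨f, hf, hcmp⟩ := hc5
    have p01 : f 0 < f 1 := hf (by decide)
    have p12 : f 1 < f 2 := hf (by decide)
    have p23 : f 2 < f 3 := hf (by decide)
    have p34 : f 3 < f 4 := hf (by decide)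
    have w23 : w (f 2) < w (f 3) := (hcmp 2 3).mp (by decide)
    have w34 : w (f 3) < w (f 4) := (hcmp 3 4).mp (by decide)
    have w41 : w (f 4) < w (f 1) := (hcmp 4 1).mp (by decide)
    have w10 : w (f 1) < w (f 0) := (hcmp 1 0).mp (by decide)
    have p13 := p12.trans p23
    have u23 := aux_fact1 hv p23 w23
    have u34 := aux_fact1 hv p34 w34
    have u31 := aux_fact2l hv w34 w41 u34
    have u30 := aux_fact2l hv w34 (w41.trans w10) u34
    rcases tri (f 0) (f 1) p01.ne with h|h
    · exact Or.inr (aux_c3412 (v*w) p01 p12 p23 h u23 u30)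
    · exact Or.inl (aux_c321 (v*w) p01 p13 h u31)
  · have hc5 : ∃ g : Fin 5 → Fin n, StrictMono g ∧ ∀ i j : Fin 5,
        ([5,4,2,1,3] : List ℕ).get i < ([5,4,2,1,3] : List ℕ).get j ↔ w (g i) < w (g j) := hc
    obtain ⟨f, hf, hcmp⟩ := hc5
    have p01 : f 0 < f 1 := hf (by decide)
    have p12 : f 1 < f 2 := hf (by decide)
    have p23 : f 2 < f 3 := hf (by decide)
    have p34 : f 3 < f 4 := hf (by decide)
    have w24 : w (f 2) < w (f 4) := (hcmp 2 4).mp (by decide)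
    have w32 : w (f 3) < w (f 2) := (hcmp 3 2).mp (by decide)
    have w41 : w (f 4) < w (f 1) := (hcmp 4 1).mp (by decide)
    have w10 : w (f 1) < w (f 0) := (hcmp 1 0).mp (by decide)
    have p24 := p23.trans p34
    have u24 := aux_fact1 hv p24 w24
    have u34 := aux_fact1 hv p34 (w32.trans w24)
    have u21 := aux_fact2l hv w24 w41 u24
    have u30 := aux_fact2l hv (w32.trans w24) (w41.trans w10) u34
    rcases tri (f 0) (f 1) p01.ne with hA|hA
    · rcases tri (f 2) (f 3) p23.ne with hB|hB
      · exact Or.inr (aux_c3412 (v*w) p01 p12 p23 hA hB u30)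
      · exact Or.inl (aux_c321 (v*w) p12 p23 u21 hB)
    · exact Or.inl (aux_c321 (v*w) p01 p12 hA u21)
  · have hc5 : ∃ g : Fin 5 → Fin n, StrictMono g ∧ ∀ i j : Fin 5,
        ([5,4,2,3,1] : List ℕ).get i < ([5,4,2,3,1] : List ℕ).get j ↔ w (g i) < w (g j) := hc
    obtain ⟨f, hf, hcmp⟩ := hc5
    have p01 : f 0 < f 1 := hf (by decide)
    have p12 : f 1 < f 2 := hf (by decide)
    have p23 : f 2 < f 3 := hf (by decide)
    have p34 : f 3 < f 4 := hf (by decide)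
    have w23 : w (f 2) < w (f 3) := (hcmp 2 3).mp (by decide)
    have w31 : w (f 3) < w (f 1) := (hcmp 3 1).mp (by decide)
    have w42 : w (f 4) < w (f 2) := (hcmp 4 2).mp (by decide)
    have w10 : w (f 1) < w (f 0) := (hcmp 1 0).mp (by decide)
    have p24 := p23.trans p34
    have u23 := aux_fact1 hv p23 w23
    have u21 := aux_fact2l hv w23 w31 u23
    have u43 := aux_fact2r hv w42 w23 u23
    have u40 := aux_fact2l hv (w42.trans w23) (w31.trans w10) u43
    rcases tri (f 0) (f 1) p01.ne with hA|hA
    · rcases tri (f 2) (f 4) p24.ne with hB|hB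
      · exact Or.inr (aux_c3412 (v*w) p01 p12 p24 hA hB u40)
      · exact Or.inl (aux_c321 (v*w) p12 p24 u21 hB)
    · exact Or.inl (aux_c321 (v*w) p01 p12 hA u21)
end

section
/- Suppose v = w_0(J(w)) for w ∈ S_n and (v,w) is divisible after position i with i minimal. Writing {a < b} = v[1,i] \ w[1,i] and {c < d} = w[1,i] \ v[1,i], we have a < c, b < d, and moreover b + 1 < c. -/
open Equiv

lemma mem_prefSet {n : ℕ} (u : Perm (Fin n)) (i : ℕ) (x : Fin n) :
    x ∈ prefSet u i ↔ ((u⁻¹ x : Fin n) : ℕ) < i := by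
  unfold prefSet
  simp only [Finset.mem_image, Finset.mem_filter, Finset.mem_univ, true_and]
  constructor
  · rintro ⟨j, hj, rfl⟩
    simpa using hj
  · intro h
    exact ⟨u⁻¹ x, h, u.apply_symm_apply x⟩

lemma swap_mono {n : ℕ} (x x' : Fin n) (hxx : (x:ℕ)+1 = (x':ℕ))
    (y z : Fin n) (hyz : y < z) (hne : ¬(y = x ∧ z = x')) :
    Equiv.swap x x' y < Equiv.swap x x' z := by
  have hyzv : (y:ℕ) < (z:ℕ) := hyz
  rcases eq_or_ne y x with rfl | hy1
  · have hz2 : z ≠ x' := fun h => hne ⟨rfl, h⟩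
    have hz1 : z ≠ y := hyz.ne'
    have hz2v : (z:ℕ) ≠ (x':ℕ) := fun h => hz2 (Fin.ext h)
    rw [Equiv.swap_apply_left, Equiv.swap_apply_of_ne_of_ne hz1 hz2]
    exact Fin.lt_def.mpr (by omega)
  · rcases eq_or_ne y x' with rfl | hy2
    · have hz1 : z ≠ x := by
        intro h; subst h
        exact absurd hyzv (by omega)
      have hz2 : z ≠ y := hyz.ne'
      rw [Equiv.swap_apply_right, Equiv.swap_apply_of_ne_of_ne hz1 hz2]
      exact Fin.lt_def.mpr (by omega)
    · rw [Equiv.swap_apply_of_ne_of_ne hy1 hy2]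
      rcases eq_or_ne z x with rfl | hz1
      · rw [Equiv.swap_apply_left]
        exact Fin.lt_def.mpr (by omega)
      · rcases eq_or_ne z x' with rfl | hz2
        · rw [Equiv.swap_apply_right]
          have hy1v : (y:ℕ) ≠ (x:ℕ) := fun h => hy1 (Fin.ext h)
          exact Fin.lt_def.mpr (by omega)
        · rw [Equiv.swap_apply_of_ne_of_ne hz1 hz2]
          exact hyz

lemma len_lt_swap {n : ℕ} (x x' : Fin n) (hxx : (x:ℕ)+1 = (x':ℕ))
    (u : Perm (Fin n)) (h : u⁻¹ x < u⁻¹ x') :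
    len u < len (Equiv.swap x x' * u) := by
  have hxlt : x < x' := Fin.lt_def.mpr (by omega)
  apply Finset.card_lt_card
  constructor
  · intro q hq
    simp only [Finset.mem_filter, Finset.mem_univ, true_and] at *
    simp only [Perm.mul_apply] at *
    refine ⟨hq.1, ?_⟩
    apply swap_mono x x' hxx _ _ hq.2
    rintro ⟨h1, h2⟩
    have e1 : u⁻¹ x = q.2 := by rw [← h1]; simp
    have e2 : u⁻¹ x' = q.1 := by rw [← h2]; simp
    rw [e1, e2] at h
    exact absurd hq.1 (not_lt.mpr h.le)
  · intro hsub
    have hmem : (u⁻¹ x, u⁻¹ x') ∈ Finset.univ.filter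
        fun q : Fin n × Fin n => q.1 < q.2 ∧ (Equiv.swap x x' * u) q.2 < (Equiv.swap x x' * u) q.1 := by
      simp only [Finset.mem_filter, Finset.mem_univ, true_and]
      simp only [Perm.mul_apply,
        Perm.coe_inv, Equiv.apply_symm_apply]
      exact ⟨h, by rw [Equiv.swap_apply_left, Equiv.swap_apply_right]; exact hxlt⟩
    have := hsub hmem
    simp only [Finset.mem_filter, Finset.mem_univ, true_and, Perm.coe_inv, Equiv.apply_symm_apply] at this
    exact absurd this.2 (not_lt.mpr hxlt.le)

lemma v_descent {n : ℕ} (w v : Perm (Fin n)) (hv : IsW0J w v)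
    (x x' : Fin n) (hxx : (x:ℕ)+1 = (x':ℕ)) (hw : w⁻¹ x' < w⁻¹ x) :
    v⁻¹ x' < v⁻¹ x := by
  by_contra hcon
  push_neg at hcon
  have hne : v⁻¹ x ≠ v⁻¹ x' := by
    intro h
    have : x = x' := v⁻¹.injective h
    subst this; omega
  have hlt : v⁻¹ x < v⁻¹ x' := lt_of_le_of_ne hcon hne
  have ht : Equiv.swap x x' ∈ descentGens w := ⟨x, x', hxx, rfl, hw⟩
  have hmem : Equiv.swap x x' * v ∈ Subgroup.closure (descentGens w) :=
    Subgroup.mul_mem _ (Subgroup.subset_closure ht) hv.1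
  exact absurd (hv.2 _ hmem) (not_le.mpr (len_lt_swap x x' hxx v hlt))

lemma closure_pres_s18 {n : ℕ} (w : Perm (Fin n)) (e : ℕ)
    (he : ∀ (z z' : Fin n), (z:ℕ) = e → (z':ℕ) = e+1 → ¬ w⁻¹ z' < w⁻¹ z)
    {g : Perm (Fin n)} (hg : g ∈ Subgroup.closure (descentGens w)) :
    ∀ y : Fin n, (y:ℕ) ≤ e → ((g y : Fin n) : ℕ) ≤ e := by
  induction hg using Subgroup.closure_induction with
  | mem u hu =>
    obtain ⟨z, z', hzz, rfl, hdes⟩ := hu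
    intro y hy
    rcases eq_or_ne y z with h1 | h1
    · have hyz : (y:ℕ) = (z:ℕ) := congrArg Fin.val h1
      rw [h1, Equiv.swap_apply_left]
      have hze : (z:ℕ) ≠ e := fun hze => he z z' hze (by omega) hdes
      omega
    · rcases eq_or_ne y z' with h2 | h2
      · have hyz : (y:ℕ) = (z':ℕ) := congrArg Fin.val h2
        rw [h2, Equiv.swap_apply_right]
        omega
      · rw [Equiv.swap_apply_of_ne_of_ne h1 h2]; exact hy
  | one => intro y hy; simpa using hy
  | mul g₁ g₂ _ _ ih1 ih2 =>
    intro y hy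
    rw [Perm.mul_apply]
    exact ih1 _ (ih2 _ hy)
  | inv g hgm ih =>
    intro y hy
    set S : Finset (Fin n) := Finset.univ.filter fun y : Fin n => (y:ℕ) ≤ e with hS
    have hsub : S.image g ⊆ S := by
      intro t ht
      simp only [hS, Finset.mem_image, Finset.mem_filter, Finset.mem_univ, true_and] at *
      obtain ⟨s, hs, rfl⟩ := ht
      exact ih s hs
    have hcard : S.card ≤ (S.image g).card := by
      rw [Finset.card_image_of_injective _ g.injective]
    have heq : S.image g = S := Finset.eq_of_subset_of_card_le hsub hcard
    have hyS : y ∈ S := by simp [hS, hy]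
    rw [← heq] at hyS
    simp only [Finset.mem_image] at hyS
    obtain ⟨s, hs, hgs⟩ := hyS
    have : g⁻¹ y = s := by rw [← hgs]; simp
    rw [this]
    simp only [hS, Finset.mem_filter] at hs
    exact hs.2

theorem stmt18 (n i : ℕ) (w v : Perm (Fin n)) (hv : IsW0J w v)
    (hdiv : DivisibleAfter v w i) (hmin : ∀ j, DivisibleAfter v w j → i ≤ j)
    (a b c d : Fin n) (hab : a < b) (hcd : c < d)
    (hvw : prefSet v i \ prefSet w i = {a, b})
    (hwv : prefSet w i \ prefSet v i = {c, d}) :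
    a < c ∧ b < d ∧ (b : ℕ) + 1 < (c : ℕ) := by
  have hb : b ∈ prefSet v i \ prefSet w i := by rw [hvw]; simp
  have hc : c ∈ prefSet w i \ prefSet v i := by rw [hwv]; simp
  rw [Finset.mem_sdiff] at hb hc
  obtain ⟨hbv, hbw⟩ := hb
  obtain ⟨hcw, hcv⟩ := hc
  rw [mem_prefSet] at hbv hcw
  rw [mem_prefSet] at hbw hcv
  -- hbv : (v⁻¹ b) < i, hbw : ¬ (w⁻¹ b) < i, hcw : (w⁻¹ c) < i, hcv : ¬ (v⁻¹ c) < i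
  have hbc : b < c := by
    rcases lt_trichotomy b c with h | h | h
    · exact h
    · exact absurd (h ▸ hbv) hcv
    · exfalso
      have hC : (c:ℕ) < (b:ℕ) := h
      by_cases hE : ∃ e, (c:ℕ) ≤ e ∧ e + 1 ≤ (b:ℕ) ∧
          ∀ (z z' : Fin n), (z:ℕ) = e → (z':ℕ) = e+1 → ¬ w⁻¹ z' < w⁻¹ z
      · obtain ⟨e, he1, he2, he3⟩ := hE
        have hvb : e < ((v⁻¹ b : Fin n) : ℕ) := by
          by_contra hle
          push_neg at hle
          have := closure_pres_s18 w e he3 hv.1 (v⁻¹ b) hle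
          simp only [Perm.coe_inv, Equiv.apply_symm_apply] at this
          omega
        have hvc : ((v⁻¹ c : Fin n) : ℕ) ≤ e :=
          closure_pres_s18 w e he3 (Subgroup.inv_mem _ hv.1) c he1
        exact hcv (by omega)
      · push_neg at hE
        have chain : ∀ k, ∀ x : Fin n, (x:ℕ) = (c:ℕ) + k → (x:ℕ) ≤ (b:ℕ) →
            ((w⁻¹ x : Fin n) : ℕ) < i := by
          intro k
          induction k with
          | zero =>
            intro x hx _
            have : x = c := Fin.ext (by omega)
            rw [this]; exact hcw
          | succ k ih =>
            intro x hx hxb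
            obtain ⟨z, z', hz, hz', hdes⟩ := hE ((c:ℕ)+k) (by omega) (by omega)
            have hzb : (z:ℕ) ≤ (b:ℕ) := by omega
            have hzx : z' = x := Fin.ext (by omega)
            have h1 : ((w⁻¹ z : Fin n):ℕ) < i := ih z hz hzb
            have h2 : ((w⁻¹ z' : Fin n):ℕ) < ((w⁻¹ z : Fin n):ℕ) := hdes
            rw [hzx] at h2
            omega
        exact hbw (chain ((b:ℕ)-(c:ℕ)) b (by omega) le_rfl)
  have hno : (b:ℕ)+1 ≠ (c:ℕ) := by
    intro heq
    have hdes : w⁻¹ c < w⁻¹ b := by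
      have h1 : ((w⁻¹ c : Fin n) : ℕ) < i := hcw
      have h2 : ¬ ((w⁻¹ b : Fin n) : ℕ) < i := hbw
      exact Fin.lt_def.mpr (by omega)
    have := v_descent w v hv b c heq hdes
    have : ((v⁻¹ c : Fin n) : ℕ) < ((v⁻¹ b : Fin n) : ℕ) := this
    exact hcv (by omega)
  have hbcv : (b:ℕ) < (c:ℕ) := hbc
  exact ⟨hab.trans hbc, hbc.trans hcd, by omega⟩
end
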